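/- arXiv:2209.08205 — 5 statements merged into one kernel-verified Lean document; each statement's English description precedes it below -/
import Mathlib

section
/- Soundness of the rule (Changes): if OnlyIf1 A (¬A) A' holds, then OnlyThrough A (¬A) A' holds. That is, if A' is a necessary precondition for the satisfaction of A to change in one step of execution, then along any finite execution that starts in a state satisfying A and ends in a state satisfying ¬A, some state of the execution satisfies A'. -/
variable {S : Type*}

/-- A function `σ : Fin (n+1) → S` is a finite execution of the transition
relation `r` when consecutive states are related by `r`. -/
def IsExec (r : S → S → Prop) {n : ℕ} (σ : Fin (n + 1) → S) : Prop :=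
  ∀ i : Fin n, r (σ i.castSucc) (σ i.succ)

/-- `OnlyIf1 r A₁ A₂ A₃`: for every single step `r σ σ'` with `A₁ σ` and `A₂ σ'`,
we have `A₃ σ`. -/
def OnlyIf1 (r : S → S → Prop) (A₁ A₂ A₃ : S → Prop) : Prop :=
  ∀ σ σ' : S, r σ σ' → A₁ σ → A₂ σ' → A₃ σ

/-- `OnlyThrough r A₁ A₂ A₃`: every finite execution starting in an `A₁`-state and
ending in an `A₂`-state has some intermediate state satisfying `A₃`. -/
def OnlyThrough (r : S → S → Prop) (A₁ A₂ A₃ : S → Prop) : Prop :=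
  ∀ (n : ℕ) (σ : Fin (n + 1) → S), IsExec r σ → A₁ (σ 0) → A₂ (σ (Fin.last n)) →
    ∃ i : Fin (n + 1), A₃ (σ i)

/-- `OnlyIf r A₁ A₂ A₃`: every finite execution starting in an `A₁`-state and
ending in an `A₂`-state satisfies `A₃` at its first state. -/
def OnlyIf (r : S → S → Prop) (A₁ A₂ A₃ : S → Prop) : Prop :=
  ∀ (n : ℕ) (σ : Fin (n + 1) → S), IsExec r σ → A₁ (σ 0) → A₂ (σ (Fin.last n)) →
    A₃ (σ 0)

theorem Fin.exists_castSucc_and_not_succ {n : ℕ} {p : Fin (n + 1) → Prop} (h0 : p 0)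
    (hlast : ¬ p (Fin.last n)) : ∃ i : Fin n, p i.castSucc ∧ ¬ p i.succ := by
  by_contra! hstep
  exact hlast (Fin.induction h0 hstep (Fin.last n))

theorem changes_sound (r : S → S → Prop) (A A' : S → Prop)
    (h : OnlyIf1 r A (fun σ => ¬ A σ) A') :
    OnlyThrough r A (fun σ => ¬ A σ) A' := by
  intro n σ hexec hfirst hlast
  obtain ⟨i, hi, hi'⟩ := Fin.exists_castSucc_and_not_succ (p := fun j => A (σ j)) hfirst hlast
  exact ⟨i.castSucc, h _ _ (hexec i) hi hi'⟩
end

section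
/- Soundness of the rule (Trans₁): if OnlyThrough A₁ A₂ A₃ holds and OnlyThrough A₁ A₃ A holds, then OnlyThrough A₁ A₂ A holds. That is, a necessary intermediate condition (A) for reaching a necessary intermediate state (A₃) is itself a necessary intermediate condition. -/
variable {S : Type*}

theorem IsExec.comp_castLE {r : S → S → Prop} {m n : ℕ} {σ : Fin (n + 1) → S}
    (hσ : IsExec r σ) (h : m ≤ n) : IsExec r (σ ∘ Fin.castLE (Nat.succ_le_succ h)) :=
  fun i => hσ (i.castLE h)

theorem trans₁_sound (r : S → S → Prop) (A₁ A₂ A₃ A : S → Prop)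
    (h₁ : OnlyThrough r A₁ A₂ A₃) (h₂ : OnlyThrough r A₁ A₃ A) :
    OnlyThrough r A₁ A₂ A := by
  intro n σ hσ h_start h_end
  obtain ⟨i, hi⟩ := h₁ n σ hσ h_start h_end
  -- apply `h₂` to the prefix of `σ` that ends at the `A₃`-state `σ i`
  obtain ⟨j, hj⟩ := h₂ i (σ ∘ Fin.castLE (Nat.succ_le_succ i.is_le)) (hσ.comp_castLE i.is_le)
    h_start hi
  exact ⟨_, hj⟩
end

section
/- Soundness of the rule (Trans₂): if OnlyThrough A₁ A₂ A₃ holds and OnlyThrough A₃ A₂ A holds, then OnlyThrough A₁ A₂ A holds. That is, a necessary intermediate condition (A) for proceeding from a necessary intermediate state (A₃) to the end state is itself a necessary intermediate condition. -/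
variable {S : Type*}

theorem trans₂_sound (r : S → S → Prop) (A₁ A₂ A₃ A : S → Prop)
    (h₁ : OnlyThrough r A₁ A₂ A₃) (h₂ : OnlyThrough r A₃ A₂ A) :
    OnlyThrough r A₁ A₂ A := by
  intro n σ hexec hA₁ hA₂
  obtain ⟨i, hA₃⟩ := h₁ n σ hexec hA₁ hA₂
  -- consider the suffix execution starting at i
  set m := n - i.1 with hm
  have hin : i.1 ≤ n := Nat.lt_succ_iff.mp i.2
  let τ : Fin (m + 1) → S := fun j => σ ⟨i.1 + j.1, by omega⟩
  have hτexec : IsExec r τ := by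
    intro j
    have hj : i.1 + j.1 < n := by omega
    have := hexec ⟨i.1 + j.1, hj⟩
    simpa [τ, Fin.castSucc, Fin.succ, Nat.add_assoc] using this
  have h0 : τ 0 = σ i := by
    simp [τ]
  have hlast : τ (Fin.last m) = σ (Fin.last n) := by
    simp only [τ, Fin.last]
    congr 1
    exact Fin.ext (by simp; omega)
  obtain ⟨j, hAj⟩ := h₂ m τ hτexec (h0 ▸ hA₃) (hlast ▸ hA₂)
  exact ⟨⟨i.1 + j.1, by omega⟩, hAj⟩
end

section
/- Soundness of the rule (If-Trans): if OnlyThrough A₁ A₂ A₃ holds and OnlyIf A₁ A₃ A holds, then OnlyIf A₁ A₂ A holds. That is, if every execution from A₁-states to A₂-states must pass through an A₃-state, and A is a necessary precondition for reaching A₃-states from A₁-states, then A is a necessary precondition for reaching A₂-states from A₁-states. -/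
variable {S : Type*}

theorem IsExec.castLE {r : S → S → Prop} {n m : ℕ} {σ : Fin (n + 1) → S} (hσ : IsExec r σ)
    (hmn : m + 1 ≤ n + 1) : IsExec r (fun j : Fin (m + 1) => σ (Fin.castLE hmn j)) :=
  fun j => hσ (Fin.castLE (by omega) j)

/-- The prefix of `σ` that ends at its visit to an `A₃`-state is itself an execution. -/
theorem OnlyIf.apply_of_reaches {r : S → S → Prop} {A₁ A₃ A : S → Prop} (h : OnlyIf r A₁ A₃ A)
    {n : ℕ} {σ : Fin (n + 1) → S} (hσ : IsExec r σ) (hstart : A₁ (σ 0)) {i : Fin (n + 1)}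
    (hi : A₃ (σ i)) : A (σ 0) :=
  h i _ (hσ.castLE i.isLt) hstart hi

theorem ifTrans_sound (r : S → S → Prop) (A₁ A₂ A₃ A : S → Prop)
    (h₁ : OnlyThrough r A₁ A₂ A₃) (h₂ : OnlyIf r A₁ A₃ A) :
    OnlyIf r A₁ A₂ A := by
  intro n σ hσ hstart hend
  obtain ⟨i, hi⟩ := h₁ n σ hσ hstart hend
  exact h₂.apply_of_reaches hσ hstart hi
end

section
/- Soundness of the disjunction-elimination rule (If1-∨E): if OnlyIf1 A₁ A₂ (A ∨ A') holds and OnlyThrough A' A₂ False holds (i.e., no finite execution leads from an A'-state to an A₂-state), then OnlyIf1 A₁ A₂ A holds. That is, if it is impossible to reach the end state from one branch of a disjunctive necessary condition, that branch can be eliminated. -/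
variable {S : Type*}

theorem if1_orE_sound (r : S → S → Prop) (A₁ A₂ A A' : S → Prop)
    (h₁ : OnlyIf1 r A₁ A₂ (fun σ => A σ ∨ A' σ))
    (h₂ : OnlyThrough r A' A₂ (fun _ => False)) :
    OnlyIf1 r A₁ A₂ A := by
  intro σ σ' hr h1 h2
  rcases h₁ σ σ' hr h1 h2 with h | h
  · exact h
  · exfalso
    obtain ⟨i, hi⟩ := h₂ 1 ![σ, σ'] (by
      intro i
      fin_cases i
      simpa using hr) (by simpa using h) (by simpa [Fin.last] using h2)
    exact hi
end
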